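/- Fix a positive integer d and v ∈ I(d). (1) If 𝔖 is a monomial in ON(v) and α ∈ 𝔖, then there exists a v-chain C in 𝔖 with tail α such that odepth_𝔖(α) = odepth_C(α). (2) For elements α > γ of a v-chain C (not necessarily consecutive), odepth_C(α) < odepth_C(γ). (3) For elements α > γ of a monomial 𝔖 in ON(v), odepth_𝔖(α) < odepth_𝔖(γ). (4) No two comparable elements of a monomial in ON(v) have the same o-depth in it. -/

import Mathlib

namespace OG

/-- `star d k = k* = 2d+1-k`. -/
def star (d k : ℕ) : ℕ := 2 * d + 1 - k

/-- `I(d,2d)`: the set of `d`-element subsets of `{1,…,2d}`. -/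
def Idn (d : ℕ) : Set (Finset ℕ) :=
  {v | v.card = d ∧ ∀ k ∈ v, 1 ≤ k ∧ k ≤ 2 * d}

/-- The partial order on `I(d,2d)`: entrywise comparison of increasing enumerations. -/
def leI (x y : Finset ℕ) : Prop :=
  List.Forall₂ (· ≤ ·) (x.sort (· ≤ ·)) (y.sort (· ≤ ·))

/-- `I(d)`: elements of `I(d,2d)` containing exactly one of `k`, `k*` for each `k`,
with evenly many entries exceeding `d`. -/
def Iset (d : ℕ) : Set (Finset ℕ) :=
  {v | v ∈ Idn d ∧ (∀ k, 1 ≤ k → k ≤ 2 * d → (k ∈ v ↔ star d k ∉ v)) ∧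
       Even ((v.filter (fun k => d < k)).card)}

/-- membership in `N(v)`. -/
def inN (d : ℕ) (v : Finset ℕ) (p : ℕ × ℕ) : Prop :=
  1 ≤ p.1 ∧ p.1 ≤ 2 * d ∧ 1 ≤ p.2 ∧ p.2 ≤ 2 * d ∧ p.1 ∉ v ∧ p.2 ∈ v ∧ p.2 < p.1

/-- membership in `OR(v)`. -/
def inOR (d : ℕ) (v : Finset ℕ) (p : ℕ × ℕ) : Prop :=
  1 ≤ p.1 ∧ p.1 ≤ 2 * d ∧ 1 ≤ p.2 ∧ p.2 ≤ 2 * d ∧ p.1 ∉ v ∧ p.2 ∈ v ∧ p.1 < star d p.2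

/-- membership in `ON(v) = OR(v) ∩ N(v)`. -/
def inON (d : ℕ) (v : Finset ℕ) (p : ℕ × ℕ) : Prop := inN d v p ∧ inOR d v p

/-- membership in the diagonal `D(v)`. -/
def inDiag (d : ℕ) (v : Finset ℕ) (p : ℕ × ℕ) : Prop :=
  p.1 ∉ v ∧ p.2 ∈ v ∧ p.1 = star d p.2

instance (d : ℕ) (v : Finset ℕ) : DecidablePred (inN d v) := fun p => by
  unfold inN; infer_instance

instance (d : ℕ) (v : Finset ℕ) : DecidablePred (inOR d v) := fun p => by
  unfold inOR; infer_instance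

instance (d : ℕ) (v : Finset ℕ) : DecidablePred (inON d v) := fun p => by
  unfold inON; infer_instance

instance (d : ℕ) (v : Finset ℕ) : DecidablePred (inDiag d v) := fun p => by
  unfold inDiag; infer_instance

/-- `(R,C) > (r,c)` iff `R > r` and `C < c`. -/
def pgt (A B : ℕ × ℕ) : Prop := B.1 < A.1 ∧ A.2 < B.2

instance : DecidableRel pgt := fun A B => by unfold pgt; infer_instance

/-- `(R,C)` dominates `(r,c)` iff `R ≥ r` and `C ≤ c`. -/
def pdom (A B : ℕ × ℕ) : Prop := B.1 ≤ A.1 ∧ A.2 ≤ B.2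

/-- vertical projection `p_v(r,c) = (c*,c)`. -/
def pv (d : ℕ) (α : ℕ × ℕ) : ℕ × ℕ := (star d α.2, α.2)

/-- horizontal projection `p_h(r,c) = (r,r*)`. -/
def ph (d : ℕ) (α : ℕ × ℕ) : ℕ × ℕ := (α.1, star d α.1)

/-- `(r,c)^# = (c*,r*)`. -/
def hash (d : ℕ) (α : ℕ × ℕ) : ℕ × ℕ := (star d α.2, star d α.1)

/-- A `v`-chain: a strictly decreasing (under `pgt`) list of elements of `ON(v)`. -/
def IsVChain (d : ℕ) (v : Finset ℕ) (C : List (ℕ × ℕ)) : Prop :=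
  C.Chain' pgt ∧ ∀ α ∈ C, inON d v α

/-- Two consecutive elements `(r,c) > (R,C)` of a `v`-chain are connected
if `r* ≥ C` and `R > r*`. -/
def Connected (d : ℕ) (α β : ℕ × ℕ) : Prop :=
  β.2 ≤ star d α.1 ∧ star d α.1 < β.1

instance (d : ℕ) : ∀ α β, Decidable (Connected d α β) := fun α β => by
  unfold Connected; infer_instance

/-- The connected components of a `v`-chain. -/
def components (d : ℕ) (C : List (ℕ × ℕ)) : List (List (ℕ × ℕ)) :=
  C.splitBy (fun a b => decide (Connected d a b))

/-- The three possible types of an element of a `v`-chain. -/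
inductive VType | V | H | S
deriving DecidableEq

/-- The type of an element `α` of a `v`-chain `C`: type V if `α` is not the last element
of its connected component or that component has even cardinality; otherwise type H if
`p_h(α) ∈ N(v)` (i.e. `r > r*`) and type S if not. -/
def typeOf (d : ℕ) (C : List (ℕ × ℕ)) (α : ℕ × ℕ) : VType :=
  match (components d C).find? (fun g => decide (α ∈ g)) with
  | some g =>
      if g.getLast? = some α ∧ Odd g.length then
        (if star d α.1 < α.1 then VType.H else VType.S)
      else VType.V
  | none => VType.V

/-- `𝔖_{C,α}`. -/
def SCa (d : ℕ) (C : List (ℕ × ℕ)) (α : ℕ × ℕ) : Multiset (ℕ × ℕ) :=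
  match typeOf d C α with
  | VType.V => {pv d α}
  | VType.H => {pv d α, ph d α}
  | VType.S => {α, hash d α}

/-- `𝔖_C`: the multiset union of the `𝔖_{C,α}` over `α ∈ C`. -/
def SC (d : ℕ) (C : List (ℕ × ℕ)) : Multiset (ℕ × ℕ) :=
  (C.map (fun α => SCa d C α)).sum

/-- `q_{C,α}`. -/
def qCa (d : ℕ) (C : List (ℕ × ℕ)) (α : ℕ × ℕ) : ℕ × ℕ :=
  match typeOf d C α with
  | VType.S => α
  | _ => pv d α

/-- A strictly decreasing chain of elements of the monomial `S`. -/
def IsChainIn (S : Multiset (ℕ × ℕ)) (L : List (ℕ × ℕ)) : Prop :=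
  L.Chain' pgt ∧ ∀ β ∈ L, β ∈ S

/-- The depth of `α` in a monomial `S` of `N(v)`: the maximal length of a strictly
decreasing chain of elements of `S` ending at `α`. -/
noncomputable def depth (S : Multiset (ℕ × ℕ)) (α : ℕ × ℕ) : ℕ :=
  sSup {k | ∃ L, IsChainIn S L ∧ L.getLast? = some α ∧ L.length = k}

/-- The o-depth of `α` in a `v`-chain `C`: the depth of `q_{C,α}` in `𝔖_C`. -/
noncomputable def odepthC (d : ℕ) (C : List (ℕ × ℕ)) (α : ℕ × ℕ) : ℕ :=
  depth (SC d C) (qCa d C α)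

/-- The o-depth of `α` in a monomial `S` of `ON(v)`: the maximum of `odepthC` over
all `v`-chains in `S` containing `α`. -/
noncomputable def odepthM (d : ℕ) (v : Finset ℕ) (S : Multiset (ℕ × ℕ)) (α : ℕ × ℕ) : ℕ :=
  sSup {k | ∃ C, IsVChain d v C ∧ (∀ β ∈ C, β ∈ S) ∧ α ∈ C ∧ odepthC d C α = k}

/-- A distinguished subset of `N(v)`. -/
def Distinguished (d : ℕ) (v : Finset ℕ) (S : Finset (ℕ × ℕ)) : Prop :=
  (∀ p ∈ S, inN d v p) ∧
  ∀ A ∈ S, ∀ B ∈ S, A ≠ B →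
    A.1 ≠ B.1 ∧ A.2 ≠ B.2 ∧ (B.1 < A.1 → (B.1 < A.2 ∨ A.2 < B.2))

/-- The element of `I(d,2d)` attached to a distinguished subset `S` of `N(v)`:
remove from `v` the column indices of elements of `S` and add their row indices. -/
def toW (v : Finset ℕ) (S : Finset (ℕ × ℕ)) : Finset ℕ :=
  (v \ S.image Prod.snd) ∪ S.image Prod.fst

/-- `w(C) = w_C`, the element of `I(d,2d)` attached to the `v`-chain `C` via the
distinguished subset `𝔖_C`. -/
def wC (d : ℕ) (v : Finset ℕ) (C : List (ℕ × ℕ)) : Finset ℕ :=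
  toW v (SC d C).toFinset

/-- `w` ortho-dominates a monomial `S` in `ON(v)`: `w ≥ w(C)` for every `v`-chain
`C` contained in `S`. -/
def ODominates (d : ℕ) (v w : Finset ℕ) (S : Multiset (ℕ × ℕ)) : Prop :=
  ∀ C : List (ℕ × ℕ), IsVChain d v C → (∀ β ∈ C, β ∈ S) → leI (wC d v C) w

/-- `x` dominates a monomial `S` in `N(v)` (in the sense of the Grassmannian case):
`x ≥ w_L` for every strictly decreasing chain `L` contained in `S`. -/
def Dominates (d : ℕ) (v x : Finset ℕ) (S : Multiset (ℕ × ℕ)) : Prop :=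
  ∀ L : List (ℕ × ℕ), L.Chain' pgt → (∀ β ∈ L, β ∈ S) → leI (toW v L.toFinset) x

/-- The `v`-degree of `θ`: half the cardinality of `v \ θ`. -/
def vdeg (v θ : Finset ℕ) : ℕ := (v \ θ).card / 2

/-- the element next to `α` in the list `C`. -/
def nextInC (C : List (ℕ × ℕ)) (α : ℕ × ℕ) : Option (ℕ × ℕ) :=
  C[C.idxOf α + 1]?

/-- The critical element of a `v`-chain: its first element whose horizontal projection
does not belong to `N(v)` (i.e. with `r ≤ r*`). -/
def critical (d : ℕ) (C : List (ℕ × ℕ)) : Option (ℕ × ℕ) :=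
  C.find? (fun x => decide (x.1 ≤ star d x.1))

/-- `α` is the last element of its connected component in `C`. -/
def isCompLast (d : ℕ) (C : List (ℕ × ℕ)) (α : ℕ × ℕ) : Prop :=
  ∃ g ∈ components d C, g.getLast? = some α

/-- The condition (*): `α` has type H in `C` and `p_h(α) ≯ β'` for some `β' ∈ 𝔖_{C,β}`. -/
def starCond (d : ℕ) (C : List (ℕ × ℕ)) (α β : ℕ × ℕ) : Prop :=
  typeOf d C α = VType.H ∧ ∃ β' ∈ SCa d C β, ¬ pgt (ph d α) β'

/-- A standard monomial in `I(d)`: a weakly decreasing sequence of elements of `I(d)`. -/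
def IsStdMon (d : ℕ) (L : List (Finset ℕ)) : Prop :=
  (∀ θ ∈ L, θ ∈ Iset d) ∧ L.Chain' (fun a b => leI b a)

/-- A standard monomial is `w`-dominated if `w ≥ θ₁`. -/
def WDominated (w : Finset ℕ) (L : List (Finset ℕ)) : Prop :=
  ∀ θ, L.head? = some θ → leI θ w

/-- A standard monomial is `v`-compatible if each member is comparable with `v`
and distinct from `v`. -/
def VCompatible (v : Finset ℕ) (L : List (Finset ℕ)) : Prop :=
  ∀ θ ∈ L, θ ≠ v ∧ (leI θ v ∨ leI v θ)

/-- The degree of a standard monomial: the sum of the `v`-degrees of its members. -/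
def stdDeg (v : Finset ℕ) (L : List (Finset ℕ)) : ℕ :=
  (L.map (fun θ => vdeg v θ)).sum

end OG

/-!
The o-depth of `α` in a chain `C` is the depth of `q_{C,α}` in `𝔖_C`, and depth strictly
increases along `>`, so (2) reduces to `q_{C,·}` being strictly decreasing along `C`: type S
propagates down a chain, and otherwise `p_v(α)` lies above both `p_v(γ)` and `γ`.

Appending an element below the tail of a chain does not change the o-depths of its elements: only
the tail can change type, from H to V (a tail of type S is never connected to what follows), and
neither its lost `p_h` nor the new entries of `𝔖` lie above any old `q`, while the depth of `q`
only sees the part of `𝔖` above `q`. So a chain realising `odepth_𝔖(α)` can be cut at `α`,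
giving (1), and then extended by any `γ < α` in `𝔖`, giving (3) and hence (4).
-/

namespace List

variable {α : Type*}

theorem splitBy_append_singleton_of_not_rel {r : α → α → Bool} {l : List α} {a : α}
    (h : ∀ x ∈ l.getLast?, r x a = false) : (l ++ [a]).splitBy r = l.splitBy r ++ [[a]] := by
  rw [splitBy_append (by simpa using h),
    splitBy_of_isChain (l := [a]) (by simp) (isChain_singleton a)]

theorem splitBy_append_singleton_of_rel {r : α → α → Bool} {l g : List α} {gs : List (List α)}
    {a : α} (hl : l.splitBy r = gs ++ [g]) (h : ∀ x ∈ l.getLast?, r x a) :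
    (l ++ [a]).splitBy r = gs ++ [g ++ [a]] := by
  obtain ⟨rfl, hnil, hchain, hsep⟩ := splitBy_eq_iff.mp hl
  have hg : g ≠ [] := fun h => hnil (by simp [h])
  rw [splitBy_eq_iff]
  refine ⟨by simp, by simp_all, fun m hm => ?_, ?_⟩
  · rcases mem_append.mp hm with hm | hm
    · exact hchain m (mem_append_left _ hm)
    · rw [mem_singleton.mp hm]
      refine isChain_append.mpr ⟨hchain g (by simp), isChain_singleton a, fun x hx y hy => ?_⟩
      obtain rfl : a = y := by simpa using hy
      exact h x (by simpa [getLast?_append, getLast?_eq_some_getLast hg] using hx)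
  · rw [isChain_append] at hsep ⊢
    refine ⟨hsep.1, isChain_singleton _, fun x hx y hy => ?_⟩
    obtain rfl : g ++ [a] = y := by simpa using hy
    obtain ⟨hx', _, hrel⟩ := hsep.2.2 x hx g (by simp)
    exact ⟨hx', by simp, by simpa [head_append_of_ne_nil hg] using hrel⟩

theorem find?_mem_eq_some {l : List (List α)} {g : List α} {x : α}
    [∀ g' : List α, Decidable (x ∈ g')] (hl : l.Pairwise Disjoint) (hg : g ∈ l) (hx : x ∈ g) :
    l.find? (fun g' => decide (x ∈ g')) = some g := by
  induction l with
  | nil => cases hg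
  | cons g₀ l ih =>
    rw [pairwise_cons] at hl
    rcases mem_cons.mp hg with rfl | hg
    · exact find?_cons_of_pos (by simpa using hx)
    · rw [find?_cons_of_neg (by simpa using fun h₀ => hl.1 g hg h₀ hx)]
      exact ih hl.2 hg

theorem eq_or_rel_of_getLast?_eq_some {R : α → α → Prop} {l : List α} {y x : α}
    (hl : l.Pairwise R) (hy : l.getLast? = some y) (hx : x ∈ l) : x = y ∨ R x y := by
  obtain ⟨l', rfl⟩ := getLast?_eq_some_iff.mp hy
  rcases mem_append.mp hx with hx | hx
  · exact Or.inr ((pairwise_append.mp hl).2.2 x hx y (mem_singleton_self y))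
  · exact Or.inl (mem_singleton.mp hx)

theorem mem_sum_map_multiset {β : Type*} {f : β → Multiset α} {l : List β} {x : α} :
    x ∈ (l.map f).sum ↔ ∃ b ∈ l, x ∈ f b := by
  induction l <;> simp [*]

end List

namespace OG

open List

instance : IsStrictOrder (ℕ × ℕ) pgt where
  irrefl _ h := lt_irrefl _ h.1
  trans _ _ _ h₁ h₂ := ⟨h₂.1.trans h₁.1, h₁.2.trans h₂.2⟩

theorem IsVChain.pairwise {d : ℕ} {v : Finset ℕ} {C : List (ℕ × ℕ)} (hC : IsVChain d v C) :
    C.Pairwise pgt :=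
  isChain_iff_pairwise.mp hC.1

theorem IsVChain.append_left {d : ℕ} {v : Finset ℕ} {C C' : List (ℕ × ℕ)}
    (hC : IsVChain d v (C ++ C')) : IsVChain d v C :=
  ⟨(isChain_append.mp hC.1).1, fun α hα => hC.2 α (mem_append_left _ hα)⟩

theorem IsVChain.append_singleton {d : ℕ} {v : Finset ℕ} {C : List (ℕ × ℕ)} {α γ : ℕ × ℕ}
    (hC : IsVChain d v C) (hα : C.getLast? = some α) (hαγ : pgt α γ) (hγ : inON d v γ) :
    IsVChain d v (C ++ [γ]) :=
  ⟨isChain_append.mpr ⟨hC.1, isChain_singleton γ, by simpa [hα]⟩,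
    forall_mem_append.mpr ⟨hC.2, forall_mem_singleton.mpr hγ⟩⟩

def componentType (d : ℕ) (g : List (ℕ × ℕ)) (α : ℕ × ℕ) : VType :=
  if g.getLast? = some α ∧ Odd g.length then
    (if star d α.1 < α.1 then VType.H else VType.S)
  else VType.V

section Components

variable {d : ℕ} {C g : List (ℕ × ℕ)} {α β γ : ℕ × ℕ}

theorem le_star_of_componentType_eq_S (h : componentType d g α = VType.S) : α.1 ≤ star d α.1 := by
  unfold componentType at h
  split_ifs at h with h₁ h₂
  omega

theorem le_star_of_typeOf_eq_S (h : typeOf d C α = VType.S) : α.1 ≤ star d α.1 := by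
  unfold typeOf at h
  split at h
  · exact le_star_of_componentType_eq_S h
  · cases h

theorem componentType_of_getLast?_ne (h : g.getLast? ≠ some α) : componentType d g α = VType.V :=
  if_neg fun h' => h h'.1

theorem mem_components (hα : α ∈ C) : ∃ g ∈ components d C, α ∈ g :=
  mem_flatten.mp (by rwa [components, flatten_splitBy])

theorem typeOf_eq_componentType (hC : C.Nodup) (hg : g ∈ components d C) (hα : α ∈ g) :
    typeOf d C α = componentType d g α := by
  have hdisj : (components d C).Pairwise Disjoint :=
    (nodup_flatten.mp (by rwa [components, flatten_splitBy])).2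
  unfold typeOf
  rw [find?_mem_eq_some hdisj hg hα]
  rfl

theorem getLast?_eq_of_components_eq {gs : List (List (ℕ × ℕ))}
    (hC : components d C = gs ++ [g]) : C.getLast? = g.getLast? := by
  have hg : g ≠ [] := ne_nil_of_mem_splitBy (by rw [← components, hC]; simp)
  rw [← flatten_splitBy (fun a b => decide (Connected d a b)) C, ← components, hC]
  simp [getLast?_append, getLast?_eq_some_getLast hg]

theorem components_append_singleton_of_not_connected
    (h : ∀ L ∈ C.getLast?, ¬ Connected d L γ) :
    components d (C ++ [γ]) = components d C ++ [[γ]] :=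
  splitBy_append_singleton_of_not_rel (by simpa using h)

theorem components_append_singleton_of_connected {gs : List (List (ℕ × ℕ))}
    (hC : components d C = gs ++ [g]) (h : ∀ L ∈ C.getLast?, Connected d L γ) :
    components d (C ++ [γ]) = gs ++ [g ++ [γ]] :=
  splitBy_append_singleton_of_rel hC (by simpa using h)

theorem typeOf_eq_of_mem_components {C' : List (ℕ × ℕ)} (hC : C.Nodup) (hC' : C'.Nodup)
    (hg : g ∈ components d C) (hg' : g ∈ components d C') (hα : α ∈ g) :
    typeOf d C' α = typeOf d C α := by
  rw [typeOf_eq_componentType hC hg hα, typeOf_eq_componentType hC' hg' hα]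

theorem typeOf_append_singleton (hC : (C ++ [γ]).Pairwise pgt) (hβ : β ∈ C) :
    typeOf d (C ++ [γ]) β = typeOf d C β ∨
      (C.getLast? = some β ∧ typeOf d C β = VType.H ∧ typeOf d (C ++ [γ]) β = VType.V) := by
  have hnd : C.Nodup := (hC.sublist (sublist_append_left _ _)).nodup
  have hnd' : (C ++ [γ]).Nodup := hC.nodup
  obtain ⟨g, hg, hβg⟩ := mem_components (d := d) hβ
  have hβγ : pgt β γ := (pairwise_append.mp hC).2.2 β hβ γ (mem_singleton_self γ)
  by_cases hconn : ∃ L ∈ C.getLast?, Connected d L γ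
  swap
  · exact Or.inl (typeOf_eq_of_mem_components hnd hnd' hg
      (by simp [components_append_singleton_of_not_connected (by simpa using hconn), hg]) hβg)
  obtain ⟨L, hL, hLγ⟩ := hconn
  obtain ⟨gs, g₀, hgs⟩ := (eq_nil_or_concat (components d C)).resolve_left
    (by simpa [components] using ne_nil_of_mem hβ)
  rw [concat_eq_append] at hgs
  have hcomp := components_append_singleton_of_connected (γ := γ) hgs (by simp_all)
  rw [hgs, mem_append, mem_singleton] at hg
  rcases hg with hg | rfl
  · exact Or.inl (typeOf_eq_of_mem_components hnd hnd' (by simp [hgs, hg])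
      (by simp [hcomp, hg]) hβg)
  have hV : typeOf d (C ++ [γ]) β = VType.V := by
    rw [typeOf_eq_componentType hnd' (by simp [hcomp]) (mem_append_left [γ] hβg),
      componentType_of_getLast?_ne]
    simpa using (ne_of_irrefl hβγ).symm
  rw [typeOf_eq_componentType hnd (by simp [hgs]) hβg, hV]
  unfold componentType
  split_ifs with hβ₁ hβ₂
  · exact Or.inr ⟨(getLast?_eq_of_components_eq hgs).trans hβ₁.1, rfl, rfl⟩
  · obtain rfl : β = L := by simpa [getLast?_eq_of_components_eq hgs, hβ₁.1] using hL
    exact absurd (hLγ.2.trans hβγ.1) hβ₂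
  · exact Or.inl rfl

theorem typeOf_append_singleton_self (hC : (C ++ [γ]).Nodup)
    (hγ : ∀ L ∈ C.getLast?, ¬ Connected d L γ) :
    typeOf d (C ++ [γ]) γ = componentType d [γ] γ :=
  typeOf_eq_componentType hC (by simp [components_append_singleton_of_not_connected hγ])
    (mem_singleton_self γ)

/-- Below an element with `r ≤ r*` no two consecutive elements are connected, so every later
element forms a singleton component. -/
theorem typeOf_eq_S_of_pgt (hC : C.Pairwise pgt) (hα : α ∈ C) (hγ : γ ∈ C) (hαγ : pgt α γ)
    (hS : typeOf d C α = VType.S) : typeOf d C γ = VType.S := by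
  induction C using reverseRecOn generalizing α γ with
  | nil => cases hα
  | append_singleton C δ ih =>
    have hpw : C.Pairwise pgt := hC.sublist (sublist_append_left _ _)
    have hbelow : ∀ β ∈ C, pgt β δ := fun β hβ =>
      (pairwise_append.mp hC).2.2 β hβ δ (mem_singleton_self δ)
    have hγ' : γ ∈ C ∨ γ = δ := by simpa using hγ
    have hαC : α ∈ C := by
      rcases mem_append.mp hα with hα | hα
      · exact hα
      obtain rfl := mem_singleton.mp hα
      rcases hγ' with hγ' | rfl
      · exact absurd (hbelow γ hγ') (asymm hαγ)
      · exact absurd hαγ (irrefl _)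
    have hSC : typeOf d C α = VType.S := by
      rcases typeOf_append_singleton (d := d) hC hαC with h | ⟨-, -, h⟩
      · rwa [← h]
      · rw [hS] at h; cases h
    rcases hγ' with hγC | rfl
    · rcases typeOf_append_singleton (d := d) hC hγC with h | ⟨-, h, -⟩
      · rw [h]; exact ih hpw hαC hγC hαγ hSC
      · rw [ih hpw hαC hγC hαγ hSC] at h; cases h
    · have hα₁ := le_star_of_typeOf_eq_S hSC
      have hγα := hαγ.1
      have hnc : ∀ L ∈ C.getLast?, ¬ Connected d L γ := by
        intro L hL hLγ
        have hLα : L.1 ≤ α.1 := by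
          rcases eq_or_rel_of_getLast?_eq_some hpw hL hαC with rfl | h
          exacts [le_rfl, h.1.le]
        have hγL := (hbelow L (mem_of_getLast? hL)).1
        have hLγ₂ := hLγ.2
        unfold star at *
        omega
      unfold star at hα₁
      rw [typeOf_append_singleton_self hC.nodup hnc, componentType, if_pos (by simp),
        if_neg (by unfold star; omega)]

end Components

section Projections

variable {d : ℕ} {C : List (ℕ × ℕ)} {α β γ x : ℕ × ℕ}

theorem mem_SC : x ∈ SC d C ↔ ∃ β ∈ C, x ∈ SCa d C β :=
  mem_sum_map_multiset

theorem mem_SCa (hx : x ∈ SCa d C α) :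
    x = pv d α ∨ x = ph d α ∨ x = α ∨ (x = hash d α ∧ α.1 ≤ star d α.1) := by
  unfold SCa at hx
  split at hx <;> simp only [Multiset.mem_singleton, Multiset.insert_eq_cons,
    Multiset.mem_cons] at hx
  · exact Or.inl hx
  · tauto
  · rcases hx with rfl | rfl
    · tauto
    · exact Or.inr (Or.inr (Or.inr ⟨rfl, le_star_of_typeOf_eq_S ‹_›⟩))

theorem card_SC_le : Multiset.card (SC d C) ≤ 2 * C.length := by
  have hSCa : ∀ β, Multiset.card (SCa d C β) ≤ 2 := fun β => by
    unfold SCa; split <;> simp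
  unfold SC
  generalize SCa d C = f at hSCa ⊢
  induction C with
  | nil => simp
  | cons β C ih =>
    simp only [map_cons, sum_cons, Multiset.card_add, length_cons]
    linarith [hSCa β]

theorem qCa_eq_pv (h : typeOf d C α ≠ VType.S) : qCa d C α = pv d α := by
  unfold qCa; split <;> simp_all

theorem qCa_eq_self (h : typeOf d C α = VType.S) : qCa d C α = α := by
  unfold qCa; rw [h]

theorem qCa_mem_SC (hα : α ∈ C) : qCa d C α ∈ SC d C :=
  mem_SC.mpr ⟨α, hα, by unfold qCa SCa; split <;> simp_all⟩

theorem qCa_append_singleton (hC : (C ++ [γ]).Pairwise pgt) (hβ : β ∈ C) :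
    qCa d (C ++ [γ]) β = qCa d C β := by
  rcases typeOf_append_singleton hC hβ with h | ⟨-, hH, hV⟩
  · unfold qCa; rw [h]
  · rw [qCa_eq_pv (by simp [hV]), qCa_eq_pv (by simp [hH])]

theorem mem_SC_of_mem_SC_append_singleton (hC : (C ++ [γ]).Pairwise pgt)
    (hx : x ∈ SC d (C ++ [γ])) : x ∈ SC d C ∨ x ∈ SCa d (C ++ [γ]) γ := by
  obtain ⟨β, hβ, hxβ⟩ := mem_SC.mp hx
  rcases mem_append.mp hβ with hβ | hβ
  swap
  · rw [mem_singleton.mp hβ] at hxβ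
    exact Or.inr hxβ
  refine Or.inl (mem_SC.mpr ⟨β, hβ, ?_⟩)
  unfold SCa at hxβ ⊢
  rcases typeOf_append_singleton hC hβ with h | ⟨-, hH, hV⟩
  · rwa [h] at hxβ
  · rw [hV] at hxβ
    rw [hH]
    simp_all

theorem mem_SC_append_singleton_of_mem_SC (hC : (C ++ [γ]).Pairwise pgt) (hx : x ∈ SC d C) :
    x ∈ SC d (C ++ [γ]) ∨ ∃ L ∈ C.getLast?, x = ph d L := by
  obtain ⟨β, hβ, hxβ⟩ := mem_SC.mp hx
  have hβ' : β ∈ C ++ [γ] := mem_append_left _ hβ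
  unfold SCa at hxβ
  rcases typeOf_append_singleton hC hβ with h | ⟨hL, hH, hV⟩
  · exact Or.inl (mem_SC.mpr ⟨β, hβ', by unfold SCa; rwa [h]⟩)
  · rw [hH] at hxβ
    simp only [Multiset.insert_eq_cons, Multiset.mem_cons, Multiset.mem_singleton] at hxβ
    rcases hxβ with rfl | rfl
    · exact Or.inl (mem_SC.mpr ⟨β, hβ', by unfold SCa; simp [hV]⟩)
    · exact Or.inr ⟨β, hL, rfl⟩

end Projections

section Depth

variable {S T : Multiset (ℕ × ℕ)} {L : List (ℕ × ℕ)} {q q' : ℕ × ℕ}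

theorem IsChainIn.length_le (h : IsChainIn S L) : L.length ≤ S.toFinset.card := by
  classical
  rw [← toFinset_card_of_nodup (isChain_iff_pairwise.mp h.1).nodup]
  exact Finset.card_le_card fun x hx => Multiset.mem_toFinset.mpr (h.2 x (mem_toFinset.mp hx))

theorem depth_bddAbove :
    BddAbove {k | ∃ L, IsChainIn S L ∧ L.getLast? = some q ∧ L.length = k} :=
  ⟨S.toFinset.card, by rintro _ ⟨L, hL, -, rfl⟩; exact hL.length_le⟩

theorem depth_le_card : depth S q ≤ S.toFinset.card :=
  csSup_le' (by rintro _ ⟨L, hL, -, rfl⟩; exact hL.length_le)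

theorem length_le_depth (hL : IsChainIn S L) (hq : L.getLast? = some q) :
    L.length ≤ depth S q :=
  le_csSup depth_bddAbove ⟨L, hL, hq, rfl⟩

theorem exists_isChainIn_length_eq_depth (hq : q ∈ S) :
    ∃ L, IsChainIn S L ∧ L.getLast? = some q ∧ L.length = depth S q :=
  Nat.sSup_mem (by exact ⟨1, [q], ⟨isChain_singleton q, by simpa⟩, rfl, rfl⟩) depth_bddAbove

theorem depth_lt_depth (hq : q ∈ S) (hq' : q' ∈ S) (h : pgt q q') : depth S q < depth S q' := by
  obtain ⟨L, hL, hlast, hlen⟩ := exists_isChainIn_length_eq_depth hq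
  have hL' : IsChainIn S (L ++ [q']) :=
    ⟨isChain_append.mpr ⟨hL.1, isChain_singleton q', by simpa [hlast]⟩,
      forall_mem_append.mpr ⟨hL.2, forall_mem_singleton.mpr hq'⟩⟩
  have := length_le_depth hL' (getLast?_concat ..)
  simp only [length_append, length_singleton] at this
  omega

theorem depth_le_depth (hq : q ∈ T) (h : ∀ x, pgt x q → x ∈ S → x ∈ T) :
    depth S q ≤ depth T q :=
  csSup_le' <| by
    rintro _ ⟨L, hL, hlast, rfl⟩
    refine length_le_depth ⟨hL.1, fun x hx => ?_⟩ hlast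
    rcases eq_or_rel_of_getLast?_eq_some (isChain_iff_pairwise.mp hL.1) hlast hx with rfl | hxq
    · exact hq
    · exact h x hxq (hL.2 x hx)

end Depth

section ODepth

variable {d : ℕ} {v : Finset ℕ} {C : List (ℕ × ℕ)} {S : Multiset (ℕ × ℕ)} {α β γ : ℕ × ℕ}

theorem qCa_eq_pv_or_self : qCa d C α = pv d α ∨ qCa d C α = α := by
  unfold qCa; split <;> simp

theorem not_pgt_qCa_of_mem_SCa {C' : List (ℕ × ℕ)} {x : ℕ × ℕ} (hβ : inON d v β)
    (hγ : inON d v γ) (hβγ : pgt β γ) (hx : x ∈ SCa d C' γ) : ¬ pgt x (qCa d C β) := by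
  obtain ⟨⟨-, -, -, hβ₂, -, -, -⟩, ⟨-, -, -, -, -, -, hβ₃⟩⟩ := hβ
  obtain ⟨⟨-, hγ₁, -, hγ₂, -, -, hγ₃⟩, ⟨-, -, -, -, -, -, hγ₄⟩⟩ := hγ
  obtain ⟨h₁, h₂⟩ := hβγ
  rintro ⟨hx₁, hx₂⟩
  rcases mem_SCa hx with rfl | rfl | rfl | ⟨rfl, hS⟩ <;>
    rcases qCa_eq_pv_or_self (d := d) (C := C) (α := β) with hq | hq <;>
    rw [hq] at hx₁ hx₂ <;> simp only [pv, ph, hash, star] at * <;> omega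

theorem not_pgt_ph_qCa {L : ℕ × ℕ} (hβ : inON d v β) (hL : L.1 ≤ β.1) :
    ¬ pgt (ph d L) (qCa d C β) := by
  obtain ⟨-, ⟨-, -, -, -, -, -, hβ₃⟩⟩ := hβ
  rintro ⟨hx₁, hx₂⟩
  rcases qCa_eq_pv_or_self (d := d) (C := C) (α := β) with hq | hq <;>
    rw [hq] at hx₁ hx₂ <;> simp only [pv, ph, star] at * <;> omega

theorem odepthC_append_singleton (hC : IsVChain d v (C ++ [γ])) (hβ : β ∈ C) :
    odepthC d (C ++ [γ]) β = odepthC d C β := by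
  have hpw := hC.pairwise
  have hβγ : pgt β γ := (pairwise_append.mp hpw).2.2 β hβ γ (mem_singleton_self γ)
  have hON : ∀ α ∈ C, inON d v α := hC.append_left.2
  have hq := qCa_append_singleton (d := d) hpw hβ
  have hqmem : qCa d C β ∈ SC d (C ++ [γ]) := hq ▸ qCa_mem_SC (mem_append_left _ hβ)
  unfold odepthC
  rw [hq]
  refine le_antisymm (depth_le_depth (qCa_mem_SC hβ) fun x hx hmem => ?_)
    (depth_le_depth hqmem fun x hx hmem => ?_)
  · refine (mem_SC_of_mem_SC_append_singleton hpw hmem).resolve_right fun hxγ => ?_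
    exact not_pgt_qCa_of_mem_SCa (hON β hβ) (hC.2 γ (by simp)) hβγ hxγ hx
  · refine (mem_SC_append_singleton_of_mem_SC hpw hmem).resolve_right ?_
    rintro ⟨L, hL, rfl⟩
    refine not_pgt_ph_qCa (hON β hβ) ?_ hx
    rcases eq_or_rel_of_getLast?_eq_some hC.append_left.pairwise hL hβ with rfl | h
    exacts [le_rfl, h.1.le]

theorem odepthC_append {C' : List (ℕ × ℕ)} (hC : IsVChain d v (C ++ C')) (hβ : β ∈ C) :
    odepthC d (C ++ C') β = odepthC d C β := by
  induction C' using reverseRecOn with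
  | nil => simp
  | append_singleton C' γ ih =>
    rw [← append_assoc] at hC ⊢
    rw [odepthC_append_singleton hC (mem_append_left _ hβ), ih hC.append_left]

theorem qCa_pgt_qCa (hC : IsVChain d v C) (hα : α ∈ C) (hγ : γ ∈ C) (hαγ : pgt α γ) :
    pgt (qCa d C α) (qCa d C γ) := by
  by_cases hS : typeOf d C α = VType.S
  · rw [qCa_eq_self hS, qCa_eq_self (typeOf_eq_S_of_pgt hC.pairwise hα hγ hαγ hS)]
    exact hαγ
  · obtain ⟨-, ⟨-, -, -, hα₂, -, -, -⟩⟩ := hC.2 α hα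
    obtain ⟨-, ⟨-, -, -, -, -, -, hγ₃⟩⟩ := hC.2 γ hγ
    obtain ⟨h₁, h₂⟩ := hαγ
    rw [qCa_eq_pv hS]
    rcases qCa_eq_pv_or_self (d := d) (C := C) (α := γ) with hq | hq <;>
      rw [hq] <;> simp only [pgt, pv, star] at * <;> omega

theorem odepthC_lt_odepthC (hC : IsVChain d v C) (hα : α ∈ C) (hγ : γ ∈ C) (hαγ : pgt α γ) :
    odepthC d C α < odepthC d C γ :=
  depth_lt_depth (qCa_mem_SC hα) (qCa_mem_SC hγ) (qCa_pgt_qCa hC hα hγ hαγ)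

theorem odepthM_bddAbove :
    BddAbove {k | ∃ C, IsVChain d v C ∧ (∀ β ∈ C, β ∈ S) ∧ α ∈ C ∧ odepthC d C α = k} := by
  refine ⟨2 * S.toFinset.card, ?_⟩
  rintro _ ⟨C, hC, hCS, -, rfl⟩
  calc odepthC d C α ≤ (SC d C).toFinset.card := depth_le_card
    _ ≤ Multiset.card (SC d C) := Multiset.toFinset_card_le _
    _ ≤ 2 * C.length := card_SC_le
    _ ≤ 2 * S.toFinset.card := by grw [IsChainIn.length_le ⟨hC.1, hCS⟩]

theorem odepthC_le_odepthM (hC : IsVChain d v C) (hCS : ∀ β ∈ C, β ∈ S) (hα : α ∈ C) :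
    odepthC d C α ≤ odepthM d v S α :=
  le_csSup odepthM_bddAbove ⟨C, hC, hCS, hα, rfl⟩

theorem exists_odepthC_eq_odepthM (hS : ∀ α ∈ S, inON d v α) (hα : α ∈ S) :
    ∃ C, IsVChain d v C ∧ (∀ β ∈ C, β ∈ S) ∧ α ∈ C ∧ odepthC d C α = odepthM d v S α :=
  Nat.sSup_mem (by exact ⟨_, [α], ⟨isChain_singleton α, by simpa using hS α hα⟩,
    by simpa using hα, mem_singleton_self α, rfl⟩) odepthM_bddAbove

theorem exists_getLast?_odepthM_eq_odepthC (hS : ∀ α ∈ S, inON d v α) (hα : α ∈ S) :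
    ∃ C, IsVChain d v C ∧ (∀ β ∈ C, β ∈ S) ∧ C.getLast? = some α ∧
      odepthM d v S α = odepthC d C α := by
  obtain ⟨C, hC, hCS, hαC, hod⟩ := exists_odepthC_eq_odepthM hS hα
  obtain ⟨C₁, C₂, rfl⟩ := append_of_mem hαC
  rw [← singleton_append, ← append_assoc] at hC hCS hod
  refine ⟨C₁ ++ [α], hC.append_left, fun β hβ => hCS β (mem_append_left _ hβ),
    getLast?_concat .., ?_⟩
  rw [← hod, odepthC_append hC (by simp)]

theorem odepthM_lt_odepthM (hS : ∀ α ∈ S, inON d v α) (hα : α ∈ S) (hγ : γ ∈ S)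
    (hαγ : pgt α γ) : odepthM d v S α < odepthM d v S γ := by
  obtain ⟨C, hC, hCS, hlast, hod⟩ := exists_getLast?_odepthM_eq_odepthC hS hα
  have hαC : α ∈ C := mem_of_getLast? hlast
  have hCγ : IsVChain d v (C ++ [γ]) := hC.append_singleton hlast hαγ (hS γ hγ)
  have hCγS : ∀ β ∈ C ++ [γ], β ∈ S := forall_mem_append.mpr ⟨hCS, forall_mem_singleton.mpr hγ⟩
  calc odepthM d v S α = odepthC d (C ++ [γ]) α := by rw [hod, odepthC_append_singleton hCγ hαC]
    _ < odepthC d (C ++ [γ]) γ := odepthC_lt_odepthC hCγ (mem_append_left _ hαC) (by simp) hαγ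
    _ ≤ odepthM d v S γ := odepthC_le_odepthM hCγ hCγS (by simp)

end ODepth

end OG

open OG in
theorem stmt8_general (d : ℕ) (v : Finset ℕ) :
    -- (1)
    (∀ S : Multiset (ℕ × ℕ), (∀ α ∈ S, inON d v α) → ∀ α ∈ S,
      ∃ C : List (ℕ × ℕ), IsVChain d v C ∧ (∀ β ∈ C, β ∈ S) ∧ C.getLast? = some α ∧
        odepthM d v S α = odepthC d C α) ∧
    -- (2)
    (∀ C : List (ℕ × ℕ), IsVChain d v C → ∀ α ∈ C, ∀ γ ∈ C, pgt α γ →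
        odepthC d C α < odepthC d C γ) ∧
    -- (3)
    (∀ S : Multiset (ℕ × ℕ), (∀ α ∈ S, inON d v α) → ∀ α ∈ S, ∀ γ ∈ S, pgt α γ →
        odepthM d v S α < odepthM d v S γ) ∧
    -- (4)
    (∀ S : Multiset (ℕ × ℕ), (∀ α ∈ S, inON d v α) → ∀ α ∈ S, ∀ γ ∈ S,
        (pgt α γ ∨ pgt γ α) → odepthM d v S α ≠ odepthM d v S γ) := by
  refine ⟨fun S hS α hα => exists_getLast?_odepthM_eq_odepthC hS hα,
    fun C hC α hα γ hγ => odepthC_lt_odepthC hC hα hγ,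
    fun S hS α hα γ hγ => odepthM_lt_odepthM hS hα hγ, ?_⟩
  rintro S hS α hα γ hγ (hαγ | hγα)
  · exact (odepthM_lt_odepthM hS hα hγ hαγ).ne
  · exact (odepthM_lt_odepthM hS hγ hα hγα).ne'

open OG in
/-- basic facts about o-depths in monomials of `ON(v)`. -/
theorem stmt8 (d : ℕ) (hd : 0 < d) (v : Finset ℕ) (hv : v ∈ Iset d) :
    -- (1)
    (∀ S : Multiset (ℕ × ℕ), (∀ α ∈ S, inON d v α) → ∀ α ∈ S,
      ∃ C : List (ℕ × ℕ), IsVChain d v C ∧ (∀ β ∈ C, β ∈ S) ∧ C.getLast? = some α ∧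
        odepthM d v S α = odepthC d C α) ∧
    -- (2)
    (∀ C : List (ℕ × ℕ), IsVChain d v C → ∀ α ∈ C, ∀ γ ∈ C, pgt α γ →
        odepthC d C α < odepthC d C γ) ∧
    -- (3)
    (∀ S : Multiset (ℕ × ℕ), (∀ α ∈ S, inON d v α) → ∀ α ∈ S, ∀ γ ∈ S, pgt α γ →
        odepthM d v S α < odepthM d v S γ) ∧
    -- (4)
    (∀ S : Multiset (ℕ × ℕ), (∀ α ∈ S, inON d v α) → ∀ α ∈ S, ∀ γ ∈ S,
        (pgt α γ ∨ pgt γ α) → odepthM d v S α ≠ odepthM d v S γ) :=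
  stmt8_general d v
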